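/- If y(x) is a smooth solution of E[y] = 0 on an open interval I, and c5 ≠ 0, then ỹ(x) := y(c5·x + c6) is a solution of E[ỹ] = 0 on the preimage interval. -/

import Mathlib

noncomputable def Eode (y : ℝ → ℝ) (s : Set ℝ) (x : ℝ) : ℝ :=
  10 * (iteratedDerivWithin 3 y s x) ^ 3 * iteratedDerivWithin 7 y s x
  - 70 * (iteratedDerivWithin 3 y s x) ^ 2 * iteratedDerivWithin 4 y s x *
      iteratedDerivWithin 6 y s x
  - 49 * (iteratedDerivWithin 3 y s x) ^ 2 * (iteratedDerivWithin 5 y s x) ^ 2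
  + 280 * iteratedDerivWithin 3 y s x * (iteratedDerivWithin 4 y s x) ^ 2 *
      iteratedDerivWithin 5 y s x
  - 175 * (iteratedDerivWithin 4 y s x) ^ 4

lemma idw_open {n : ℕ} {f : ℝ → ℝ} {s : Set ℝ} (hs : IsOpen s) {x : ℝ} (hx : x ∈ s) :
    iteratedDerivWithin n f s x = iteratedDeriv n f x := by
  simp only [iteratedDerivWithin, iteratedDeriv, iteratedFDerivWithin_of_isOpen n hs hx]

theorem stmt5 (a b : ℝ) (hab : a < b) (y : ℝ → ℝ)
    (hy : ContDiffOn ℝ (⊤ : ℕ∞) y (Set.Ioo a b))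
    (hsol : ∀ x ∈ Set.Ioo a b, Eode y (Set.Ioo a b) x = 0)
    (c5 c6 : ℝ) (hc5 : c5 ≠ 0) :
    ∀ x ∈ (fun x : ℝ => c5 * x + c6) ⁻¹' Set.Ioo a b,
      Eode (fun x => y (c5 * x + c6)) ((fun x : ℝ => c5 * x + c6) ⁻¹' Set.Ioo a b) x = 0 := by
  set s : Set ℝ := Set.Ioo a b with hs
  have hsO : IsOpen s := isOpen_Ioo
  set L : ℝ → ℝ := fun x : ℝ => c5 * x + c6 with hL
  have hLO : IsOpen (L ⁻¹' s) := hsO.preimage (by fun_prop)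
  -- differentiability of iterated derivatives of y on s
  have hdiff : ∀ (n : ℕ) {u : ℝ}, u ∈ s → DifferentiableAt ℝ (iteratedDeriv n y) u := by
    intro n u hu
    have h1 : DifferentiableWithinAt ℝ (iteratedDerivWithin n y s) s u :=
      hy.differentiableOn_iteratedDerivWithin (by exact_mod_cast WithTop.coe_lt_top _)
        hsO.uniqueDiffOn u hu
    have h2 : DifferentiableAt ℝ (iteratedDerivWithin n y s) u :=
      h1.differentiableAt (hsO.mem_nhds hu)
    have hev : iteratedDerivWithin n y s =ᶠ[nhds u] iteratedDeriv n y := by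
      filter_upwards [hsO.mem_nhds hu] with t ht using idw_open hsO ht
    exact (Filter.EventuallyEq.differentiableAt_iff hev).mp h2
  -- key: iterated derivative of the composition
  have key : ∀ (n : ℕ), ∀ x ∈ L ⁻¹' s,
      iteratedDeriv n (fun t => y (L t)) x = c5 ^ n * iteratedDeriv n y (L x) := by
    intro n
    induction n with
    | zero => intro x hx; simp
    | succ n ih =>
      intro x hx
      have hev : iteratedDeriv n (fun t => y (L t)) =ᶠ[nhds x]
          fun t => c5 ^ n * iteratedDeriv n y (L t) := by
        filter_upwards [hLO.mem_nhds hx] with t ht using ih t ht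
      have hLd : HasDerivAt L c5 x := by
        simpa [hL] using ((hasDerivAt_id x).const_mul c5).add_const c6
      have hD : DifferentiableAt ℝ (iteratedDeriv n y) (L x) := hdiff n hx
      have hcomp : HasDerivAt (fun t => c5 ^ n * iteratedDeriv n y (L t))
          (c5 ^ n * (deriv (iteratedDeriv n y) (L x) * c5)) x := by
        have := (hD.hasDerivAt.comp x hLd).const_mul (c5 ^ n)
        simpa [Function.comp] using this
      rw [iteratedDeriv_succ, hev.deriv_eq, hcomp.deriv, iteratedDeriv_succ]
      ring
  intro x hx
  have hx' : L x ∈ s := hx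
  have e : ∀ n : ℕ, iteratedDerivWithin n (fun t => y (L t)) (L ⁻¹' s) x
      = c5 ^ n * iteratedDerivWithin n y s (L x) := by
    intro n
    rw [idw_open hLO hx, idw_open hsO hx', key n x hx]
  have h0 := hsol (L x) hx'
  simp only [Eode] at h0 ⊢
  rw [e 3, e 4, e 5, e 6, e 7]
  linear_combination (c5 ^ 16) * h0
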